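/- Let p ≠ 2, 3 be a prime, ℛ = ℤ_p⟦X₁,X₂,X₃,X₄,Y₁,Y₂,Y₃,Y₄⟧, and let X = 1 + (Xᵢ) and Y = 1 + (Yᵢ) be the corresponding elements of Γ(ℛ) = ker(GL₂(ℛ) → GL₂(𝔽_p)). Fix an embedding σ : S₃ → GL₂(ℤ_p) lifting the standard representation S₃ → GL₂(𝔽_p), and let P ⊆ Γ(ℛ) be the closed subgroup topologically generated by all σ(S₃)-conjugates of X and Y. Then for every complete Noetherian local ring R with residue field 𝔽_p, the map φ ↦ (φ(X), φ(Y)) gives a bijection between continuous S₃-equivariant homomorphisms P → Γ(R) and pairs of elements of Γ(R); equivalently, precomposition with the map F → P (sending the two free generators to X and Y) is a bijection Hom_{S₃}(P, Γ(R)) → Hom_{pro-p}(F, Γ(R)), where F is the free pro-p group on two generators. -/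

import Mathlib

/-!
`ℛ` is the universal complete local `ℤ_p`-algebra carrying two elements of `Γ`: for
`A, B ∈ Γ(R)` the entries of `A - 1` and `B - 1` lie in the maximal ideal of the adically
complete ring `R`, so the power series in the variables `Xᵢ, Yᵢ` can be evaluated at them. This
gives a continuous `ℤ_p`-algebra map `ℛ → R`, and the induced map `GL₂(ℛ) → GL₂(R)` is
`S₃`-equivariant, sends `X, Y` to `A, B`, and maps `P` into the closed normal subgroup `Γ(R)`.
Conversely, an equivariant continuous homomorphism on `P` is determined by its values on the
conjugates of `X` and `Y`, hence by its values on `X` and `Y`.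
-/

open Matrix IsLocalRing

noncomputable section

/-- `ℛ = ℤ_p⟦X₁,…,X₄,Y₁,…,Y₄⟧`, the power series ring in 8 variables over the `p`-adic
integers. -/
abbrev Rcal (p : ℕ) [Fact p.Prime] := MvPowerSeries (Fin 8) ℤ_[p]

def sigmaRcal (p : ℕ) [Fact p.Prime] (σZ : Equiv.Perm (Fin 3) →* GL (Fin 2) ℤ_[p]) :
    Equiv.Perm (Fin 3) →* GL (Fin 2) (Rcal p) :=
  (Matrix.GeneralLinearGroup.map (MvPowerSeries.C (σ := Fin 8) (R := ℤ_[p]))).comp σZ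

def sigmaR (p : ℕ) [Fact p.Prime] (R : Type) [CommRing R] [Algebra ℤ_[p] R]
    (σZ : Equiv.Perm (Fin 3) →* GL (Fin 2) ℤ_[p]) : Equiv.Perm (Fin 3) →* GL (Fin 2) R :=
  (Matrix.GeneralLinearGroup.map (algebraMap ℤ_[p] R)).comp σZ

namespace MvPowerSeries

variable {σ A B : Type*} [CommRing A] [CommRing B] [Algebra A B] {I : Ideal B} {a : σ → B}

lemma idealOfVars_pow_le_comap_aeval (ha : ∀ i, a i ∈ I) (n : ℕ) :
    MvPolynomial.idealOfVars σ A ^ n ≤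
      (I ^ n).comap (MvPolynomial.aeval (R := A) a : MvPolynomial σ A →+* B) := by
  rw [← Ideal.map_le_iff_le_comap, Ideal.map_pow]
  refine Ideal.pow_right_mono ?_ n
  rw [Ideal.map_span, Ideal.span_le]
  rintro _ ⟨_, ⟨i, rfl⟩, rfl⟩
  simpa using ha i

variable [Finite σ]

variable (A I) in
def truncEval (ha : ∀ i, a i ∈ I) (n : ℕ) : MvPowerSeries σ A →+* B ⧸ I ^ n :=
  (Ideal.quotientMap (I ^ n) (MvPolynomial.aeval (R := A) a : MvPolynomial σ A →+* B)
    (idealOfVars_pow_le_comap_aeval ha n)).comp (truncTotalAlgHom σ A n).toRingHom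

lemma truncEval_coe (ha : ∀ i, a i ∈ I) (n : ℕ) (p : MvPolynomial σ A) :
    truncEval A I ha n (p : MvPowerSeries σ A) =
      Ideal.Quotient.mk (I ^ n) (MvPolynomial.aeval a p) := by
  change Ideal.quotientMap _ _ (idealOfVars_pow_le_comap_aeval ha n)
    (truncTotalAlgHom σ A n (algebraMap _ _ p)) = _
  rw [AlgHom.commutes, Ideal.Quotient.algebraMap_eq, Ideal.quotientMap_mk]
  rfl

lemma factorPow_comp_truncEval (ha : ∀ i, a i ∈ I) {m n : ℕ} (hmn : m ≤ n) :
    (Ideal.Quotient.factorPow I hmn).comp (truncEval A I ha n) = truncEval A I ha m := by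
  ext F
  simp only [truncEval, RingHom.comp_apply, AlgHom.toRingHom_eq_coe, RingHom.coe_coe,
    truncTotalAlgHom_apply, Ideal.quotientMap_mk, Ideal.Quotient.factor_mk, Ideal.Quotient.eq]
  rw [← map_sub]
  exact idealOfVars_pow_le_comap_aeval ha m
    (truncTotal_sub_truncTotal_mem_pow_idealOfVars hmn le_rfl F)

variable [IsAdicComplete I B]

variable (A) in
def adicEval (ha : ∀ i, a i ∈ I) : MvPowerSeries σ A →+* B :=
  IsAdicComplete.liftRingHom I (truncEval A I ha) (factorPow_comp_truncEval ha)

lemma adicEval_coe (ha : ∀ i, a i ∈ I) (p : MvPolynomial σ A) :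
    adicEval A ha p = MvPolynomial.aeval a p :=
  congrFun (IsHausdorff.funext' I (f := fun p : MvPolynomial σ A ↦ adicEval A ha p)
    fun n p ↦ by rw [adicEval, IsAdicComplete.mk_liftRingHom, truncEval_coe]) p

@[simp]
lemma adicEval_X (ha : ∀ i, a i ∈ I) (i : σ) : adicEval A ha (X i) = a i := by
  rw [← MvPolynomial.coe_X, adicEval_coe, MvPolynomial.aeval_X]

lemma adicEval_comp_C (ha : ∀ i, a i ∈ I) : (adicEval A ha).comp C = algebraMap A B := by
  ext c
  rw [RingHom.comp_apply, ← MvPolynomial.coe_C, adicEval_coe, MvPolynomial.aeval_C]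

end MvPowerSeries

lemma RingHom.continuous_of_isAdic {A B : Type*} [CommRing A] [TopologicalSpace A]
    [IsTopologicalRing A] [CommRing B] [TopologicalSpace B] [IsTopologicalRing B]
    {I : Ideal A} {J : Ideal B} (hI : IsAdic I) (hJ : IsAdic J) (f : A →+* B)
    (hf : I.map f ≤ J) : Continuous f := by
  refine continuous_of_continuousAt_zero f ?_
  rw [ContinuousAt, map_zero]
  refine (hI.hasBasis_nhds_zero.tendsto_iff hJ.hasBasis_nhds_zero).2 fun k _ ↦ ⟨k, trivial, ?_⟩
  intro x hx
  have hk : (I ^ k).map f ≤ J ^ k := by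
    rw [Ideal.map_pow]
    exact Ideal.pow_right_mono hf k
  exact hk (Ideal.mem_map_of_mem f hx)

lemma RingHom.continuous_of_isOpen_ker {R K : Type*} [CommRing R] [TopologicalSpace R]
    [IsTopologicalRing R] [CommRing K] [TopologicalSpace K] [DiscreteTopology K] (π : R →+* K)
    (hπ : IsOpen (RingHom.ker π : Set R)) : Continuous π := by
  refine continuous_of_continuousAt_zero π ?_
  rw [ContinuousAt, map_zero, nhds_discrete K, Filter.tendsto_pure]
  exact hπ.mem_nhds (zero_mem _)

namespace Matrix.GeneralLinearGroup

variable {n R S : Type*} [Fintype n] [DecidableEq n] [CommRing R] [CommRing S]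

lemma continuous_map [TopologicalSpace R] [TopologicalSpace S] [IsTopologicalRing S]
    (f : R →+* S) (hf : Continuous f) : Continuous (map (n := n) f) :=
  Units.continuous_iff.2
    ⟨Units.continuous_val.matrix_map hf, Units.continuous_coe_inv.matrix_map hf⟩

lemma mem_ker_map_iff (π : R →+* S) (g : GL n R) :
    g ∈ (map π).ker ↔ ∀ i j, ((g : Matrix n n R) - 1) i j ∈ RingHom.ker π := by
  rw [MonoidHom.mem_ker, Units.ext_iff, ← Matrix.ext_iff]
  refine forall₂_congr fun i j ↦ ?_
  rw [RingHom.mem_ker, Matrix.sub_apply, map_sub, sub_eq_zero, Units.val_one,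
    ← Matrix.map_one π (map_zero π) (map_one π)]
  rfl

lemma isClosed_ker_map [TopologicalSpace R] [IsTopologicalRing R] [TopologicalSpace S]
    [DiscreteTopology S] (π : R →+* S) (hπ : IsOpen (RingHom.ker π : Set R)) :
    IsClosed ((map (n := n) π).ker : Set (GL n R)) :=
  isClosed_singleton.preimage (continuous_map π (π.continuous_of_isOpen_ker hπ))

lemma map_sigmaRcal {p : ℕ} [Fact p.Prime] {S : Type} [CommRing S]
    [Algebra ℤ_[p] S] (σZ : Equiv.Perm (Fin 3) →* GL (Fin 2) ℤ_[p]) {f : Rcal p →+* S}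
    (hf : f.comp MvPowerSeries.C = algebraMap ℤ_[p] S) (a : Equiv.Perm (Fin 3)) :
    map f (sigmaRcal p σZ a) = sigmaR p S σZ a := by
  rw [sigmaRcal, sigmaR, ← MonoidHom.comp_apply, ← MonoidHom.comp_assoc,
    ← map_comp, hf]

lemma coe_map_of_coe_eq_one_add_X {p : ℕ} [Fact p.Prime] {S : Type*}
    [CommRing S] (f : Rcal p →+* S) {U : GL (Fin 2) (Rcal p)} {i j k l : Fin 8}
    (hU : (U : Matrix (Fin 2) (Fin 2) (Rcal p)) =
      1 + of ![![MvPowerSeries.X i, MvPowerSeries.X j], ![MvPowerSeries.X k, MvPowerSeries.X l]]) :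
    (map f U : Matrix (Fin 2) (Fin 2) S) =
      1 + !![f (MvPowerSeries.X i), f (MvPowerSeries.X j);
        f (MvPowerSeries.X k), f (MvPowerSeries.X l)] := by
  ext a b
  fin_cases a <;> fin_cases b <;> simp [map, hU]

end Matrix.GeneralLinearGroup

section TopologicalGeneration

variable {G H : Type*} [Group G] [TopologicalSpace G] [IsTopologicalGroup G] [Group H]
  [TopologicalSpace H] {S : Set G}

lemma Subgroup.topologicalClosure_closure_le_comap {N : Subgroup H} (hN : IsClosed (N : Set H))
    (Φ : G →* H) (hΦ : Continuous Φ) (hS : S ⊆ Φ ⁻¹' N) :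
    (closure S).topologicalClosure ≤ N.comap Φ :=
  topologicalClosure_minimal _ ((closure_le _).2 hS) (hN.preimage hΦ)

lemma MonoidHom.eq_of_eqOn_topologicalClosure_closure [T2Space H]
    {f g : (Subgroup.closure S).topologicalClosure →* H} (hf : Continuous f) (hg : Continuous g)
    (h : ∀ x (hx : x ∈ S), f ⟨x, Subgroup.le_topologicalClosure _ (Subgroup.subset_closure hx)⟩ =
      g ⟨x, Subgroup.le_topologicalClosure _ (Subgroup.subset_closure hx)⟩) : f = g := by
  have hE : IsClosed ((f.eqLocus g).map (Subgroup.subtype _) : Set G) := by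
    rw [Subgroup.coe_map]
    exact (Subgroup.isClosed_topologicalClosure _).isClosedEmbedding_subtypeVal.isClosedMap _
      (isClosed_eq hf hg)
  have hPE : (Subgroup.closure S).topologicalClosure ≤ (f.eqLocus g).map (Subgroup.subtype _) :=
    Subgroup.topologicalClosure_minimal _
      ((Subgroup.closure_le _).2 fun x hx ↦ ⟨_, h x hx, rfl⟩) hE
  ext x
  obtain ⟨y, hy, hyx⟩ := hPE x.2
  rw [← Subtype.ext hyx]
  exact hy

end TopologicalGeneration

lemma exists_continuous_ringHom_map_X_Y (p : ℕ) [Fact p.Prime]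
    [TopologicalSpace (Rcal p)] [IsTopologicalRing (Rcal p)]
    (hadic : IsAdic (maximalIdeal (Rcal p)))
    {Xu Yu : GL (Fin 2) (Rcal p)}
    (hXu : (Xu : Matrix (Fin 2) (Fin 2) (Rcal p)) =
      1 + Matrix.of ![![MvPowerSeries.X 0, MvPowerSeries.X 1],
        ![MvPowerSeries.X 2, MvPowerSeries.X 3]])
    (hYu : (Yu : Matrix (Fin 2) (Fin 2) (Rcal p)) =
      1 + Matrix.of ![![MvPowerSeries.X 4, MvPowerSeries.X 5],
        ![MvPowerSeries.X 6, MvPowerSeries.X 7]])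
    {R : Type} [CommRing R] [IsLocalRing R] [TopologicalSpace R] [IsTopologicalRing R]
    (hRadic : IsAdic (maximalIdeal R)) [IsAdicComplete (maximalIdeal R) R] [Algebra ℤ_[p] R]
    {πR : R →+* ZMod p} (hπR : RingHom.ker πR = maximalIdeal R)
    {A B : GL (Fin 2) R} (hA : A ∈ (GeneralLinearGroup.map πR).ker)
    (hB : B ∈ (GeneralLinearGroup.map πR).ker) :
    ∃ f : Rcal p →+* R, Continuous f ∧ f.comp MvPowerSeries.C = algebraMap ℤ_[p] R ∧
      GeneralLinearGroup.map f Xu = A ∧ GeneralLinearGroup.map f Yu = B := by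
  rw [GeneralLinearGroup.mem_ker_map_iff, hπR] at hA hB
  set M := (A : Matrix (Fin 2) (Fin 2) R) - 1 with hM
  set N := (B : Matrix (Fin 2) (Fin 2) R) - 1 with hN
  let a : Fin 8 → R := ![M 0 0, M 0 1, M 1 0, M 1 1, N 0 0, N 0 1, N 1 0, N 1 1]
  have ha : ∀ i, a i ∈ maximalIdeal R := by
    intro i
    fin_cases i
    all_goals first | exact hA _ _ | exact hB _ _
  let f := MvPowerSeries.adicEval ℤ_[p] ha
  -- every ring map to `𝔽_p` is onto, so its kernel is the maximal ideal of the local ring `ℛ`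
  have hmax : maximalIdeal (Rcal p) ≤ (maximalIdeal R).comap f := by
    rw [← hπR, RingHom.comap_ker,
      IsLocalRing.ker_eq_maximalIdeal _ (ZMod.ringHom_surjective _)]
  refine ⟨f, RingHom.continuous_of_isAdic hadic hRadic f (Ideal.map_le_iff_le_comap.2 hmax),
    MvPowerSeries.adicEval_comp_C ha, ?_, ?_⟩
  · ext1
    rw [GeneralLinearGroup.coe_map_of_coe_eq_one_add_X f hXu]
    simp only [f, MvPowerSeries.adicEval_X]
    change 1 + !![M 0 0, M 0 1; M 1 0, M 1 1] = _
    rw [← eta_fin_two, hM, add_sub_cancel]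
  · ext1
    rw [GeneralLinearGroup.coe_map_of_coe_eq_one_add_X f hYu]
    simp only [f, MvPowerSeries.adicEval_X]
    change 1 + !![N 0 0, N 0 1; N 1 0, N 1 1] = _
    rw [← eta_fin_two, hN, add_sub_cancel]

theorem stmt_14_general (p : ℕ) [Fact p.Prime]
    [TopologicalSpace (Rcal p)] [IsTopologicalRing (Rcal p)]
    (hadic : IsAdic (maximalIdeal (Rcal p)))
    -- an embedding `σ` of `S₃` into `GL₂(ℤ_p)` lifting the standard residual representation
    (σZ : Equiv.Perm (Fin 3) →* GL (Fin 2) ℤ_[p])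
    -- the elements `X = 1 + (Xᵢ)` and `Y = 1 + (Yᵢ)` of `Γ(ℛ)`
    (Xu Yu : GL (Fin 2) (Rcal p))
    (hXu : (Xu : Matrix (Fin 2) (Fin 2) (Rcal p)) =
      1 + Matrix.of ![![MvPowerSeries.X 0, MvPowerSeries.X 1],
        ![MvPowerSeries.X 2, MvPowerSeries.X 3]])
    (hYu : (Yu : Matrix (Fin 2) (Fin 2) (Rcal p)) =
      1 + Matrix.of ![![MvPowerSeries.X 4, MvPowerSeries.X 5],
        ![MvPowerSeries.X 6, MvPowerSeries.X 7]])
    -- `P`: the closed subgroup topologically generated by the `S₃`-conjugates of `X` and `Y`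
    (P : Subgroup (GL (Fin 2) (Rcal p)))
    (hP : P = (Subgroup.closure
      {g | ∃ a : Equiv.Perm (Fin 3),
        g = sigmaRcal p σZ a * Xu * (sigmaRcal p σZ a)⁻¹ ∨
        g = sigmaRcal p σZ a * Yu * (sigmaRcal p σZ a)⁻¹}).topologicalClosure)
    (hXP : Xu ∈ P) (hYP : Yu ∈ P)
    -- a complete Noetherian local ring `R` with residue field `𝔽_p`
    (R : Type) [CommRing R] [IsLocalRing R]
    [TopologicalSpace R] [IsTopologicalRing R] (hRadic : IsAdic (maximalIdeal R))
    [IsAdicComplete (maximalIdeal R) R] [Algebra ℤ_[p] R]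
    (πR : R →+* ZMod p) (hπR : RingHom.ker πR = maximalIdeal R) :
    Function.Bijective
      (fun φ : {f : ↥P →* ↥(Matrix.GeneralLinearGroup.map (n := Fin 2) πR).ker //
          Continuous f ∧
            ∀ (a : Equiv.Perm (Fin 3)) (x y : ↥P),
              (y : GL (Fin 2) (Rcal p)) =
                  sigmaRcal p σZ a * x * (sigmaRcal p σZ a)⁻¹ →
                (f y : GL (Fin 2) R) =
                  sigmaR p R σZ a * (f x) * (sigmaR p R σZ a)⁻¹} =>
        (φ.1 ⟨Xu, hXP⟩, φ.1 ⟨Yu, hYP⟩)) := by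
  subst hP
  have : T2Space R := hRadic.isHausdorff_iff.mp inferInstance
  have hΓ : IsClosed ((GeneralLinearGroup.map (n := Fin 2) πR).ker : Set (GL (Fin 2) R)) :=
    GeneralLinearGroup.isClosed_ker_map πR (by simpa [hπR] using (isAdic_iff.mp hRadic).1 1)
  refine ⟨fun φ ψ hφψ ↦ Subtype.ext ?_, fun ⟨A, B⟩ ↦ ?_⟩
  · simp only [Prod.mk.injEq] at hφψ
    refine MonoidHom.eq_of_eqOn_topologicalClosure_closure φ.2.1 ψ.2.1 ?_
    rintro g ⟨a, rfl | rfl⟩ <;> apply Subtype.ext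
    · rw [φ.2.2 a ⟨Xu, hXP⟩ _ rfl, ψ.2.2 a ⟨Xu, hXP⟩ _ rfl, hφψ.1]
    · rw [φ.2.2 a ⟨Yu, hYP⟩ _ rfl, ψ.2.2 a ⟨Yu, hYP⟩ _ rfl, hφψ.2]
  obtain ⟨f, hfc, hfC, hfX, hfY⟩ :=
    exists_continuous_ringHom_map_X_Y p hadic hXu hYu hRadic hπR A.2 B.2
  have hΦc := GeneralLinearGroup.continuous_map (n := Fin 2) f hfc
  refine ⟨⟨((GeneralLinearGroup.map f).comp (Subgroup.subtype _)).codRestrict _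
    fun x ↦ Subgroup.topologicalClosure_closure_le_comap hΓ _ hΦc ?_ x.2,
    (hΦc.comp continuous_subtype_val).subtype_mk _, fun a x y hy ↦ ?_⟩, ?_⟩
  · rintro g ⟨a, rfl | rfl⟩ <;>
      simp only [Set.mem_preimage, map_mul, map_inv, GeneralLinearGroup.map_sigmaRcal σZ hfC,
        hfX, hfY, SetLike.mem_coe] <;>
      exact (MonoidHom.normal_ker _).conj_mem _ (SetLike.coe_mem _) _
  · change GeneralLinearGroup.map f (y : GL (Fin 2) (Rcal p)) = _
    rw [hy, map_mul, map_mul, map_inv, GeneralLinearGroup.map_sigmaRcal σZ hfC]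
    rfl
  · exact Prod.ext (Subtype.ext hfX) (Subtype.ext hfY)

/-- Let `p ≠ 2, 3` be a prime, `ℛ = ℤ_p⟦X₁,…,X₄,Y₁,…,Y₄⟧`, and let
`X = 1 + (Xᵢ)`, `Y = 1 + (Yᵢ)` in `Γ(ℛ)`. Fix an embedding `σ : S₃ → GL₂(ℤ_p)` lifting the
standard representation `S₃ → GL₂(𝔽_p)`, and let `P ⊆ Γ(ℛ)` be the closed subgroup
topologically generated by the `σ(S₃)`-conjugates of `X` and `Y`. Then for every complete
Noetherian local ring `R` with residue field `𝔽_p`, the map `φ ↦ (φ(X), φ(Y))` is a bijection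
between continuous `S₃`-equivariant homomorphisms `P → Γ(R)` and pairs of elements of
`Γ(R)`. -/
theorem stmt_14 (p : ℕ) [Fact p.Prime] (hp2 : p ≠ 2) (hp3 : p ≠ 3)
    [TopologicalSpace (Rcal p)] [IsTopologicalRing (Rcal p)]
    (hadic : IsAdic (maximalIdeal (Rcal p)))
    -- an embedding `σ` of `S₃` into `GL₂(ℤ_p)` lifting the standard residual representation
    (σZ : Equiv.Perm (Fin 3) →* GL (Fin 2) ℤ_[p]) (hσinj : Function.Injective σZ)
    (ρstd : Equiv.Perm (Fin 3) →* GL (Fin 2) (ZMod p)) (hstdinj : Function.Injective ρstd)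
    (hσlift : (Matrix.GeneralLinearGroup.map (PadicInt.toZMod (p := p))).comp σZ = ρstd)
    -- the elements `X = 1 + (Xᵢ)` and `Y = 1 + (Yᵢ)` of `Γ(ℛ)`
    (Xu Yu : GL (Fin 2) (Rcal p))
    (hXu : (Xu : Matrix (Fin 2) (Fin 2) (Rcal p)) =
      1 + Matrix.of ![![MvPowerSeries.X 0, MvPowerSeries.X 1],
        ![MvPowerSeries.X 2, MvPowerSeries.X 3]])
    (hYu : (Yu : Matrix (Fin 2) (Fin 2) (Rcal p)) =
      1 + Matrix.of ![![MvPowerSeries.X 4, MvPowerSeries.X 5],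
        ![MvPowerSeries.X 6, MvPowerSeries.X 7]])
    -- `P`: the closed subgroup topologically generated by the `S₃`-conjugates of `X` and `Y`
    (P : Subgroup (GL (Fin 2) (Rcal p)))
    (hP : P = (Subgroup.closure
      {g | ∃ a : Equiv.Perm (Fin 3),
        g = sigmaRcal p σZ a * Xu * (sigmaRcal p σZ a)⁻¹ ∨
        g = sigmaRcal p σZ a * Yu * (sigmaRcal p σZ a)⁻¹}).topologicalClosure)
    (hXP : Xu ∈ P) (hYP : Yu ∈ P)
    -- a complete Noetherian local ring `R` with residue field `𝔽_p`
    (R : Type) [CommRing R] [IsLocalRing R] [IsNoetherianRing R]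
    [TopologicalSpace R] [IsTopologicalRing R] (hRadic : IsAdic (maximalIdeal R))
    [IsAdicComplete (maximalIdeal R) R] [Algebra ℤ_[p] R]
    (πR : R →+* ZMod p) (hπR : RingHom.ker πR = maximalIdeal R)
    (hcompat : πR.comp (algebraMap ℤ_[p] R) = PadicInt.toZMod) :
    Function.Bijective
      (fun φ : {f : ↥P →* ↥(Matrix.GeneralLinearGroup.map (n := Fin 2) πR).ker //
          Continuous f ∧
            ∀ (a : Equiv.Perm (Fin 3)) (x y : ↥P),
              (y : GL (Fin 2) (Rcal p)) =
                  sigmaRcal p σZ a * x * (sigmaRcal p σZ a)⁻¹ →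
                (f y : GL (Fin 2) R) =
                  sigmaR p R σZ a * (f x) * (sigmaR p R σZ a)⁻¹} =>
        (φ.1 ⟨Xu, hXP⟩, φ.1 ⟨Yu, hYP⟩)) :=
  stmt_14_general p hadic σZ Xu Yu hXu hYu P hP hXP hYP R hRadic πR hπR

end
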